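/- Let 𝒜 be a semi-abelian category, P a regular projective object, A a simplicial object in 𝒜, and n ≥ 1. Then there is a bijection, natural in A, between the n-th homotopy group πₙ(hom(P,A), 0) of the Kan simplicial set hom(P,A) at the zero vertex and the set hom(P, HₙA), given by sending the homotopy class of f : P → ZₙA to qₙ ∘ f. -/

import Mathlib

universe w v u
noncomputable section
open CategoryTheory CategoryTheory.Limits CategoryTheory.Subobject Opposite Simplicial

namespace SemiAbPaper
section Base


variable {C : Type u} [Category.{v} C]

/-- A regular epimorphism (propositional form). -/
def IsRegEpi {X Y : C} (f : X ⟶ Y) : Prop := Nonempty (RegularEpi f)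

/-- A regular projective object. -/
def RegularProjective (P : C) : Prop :=
  ∀ {X Y : C} (e : X ⟶ Y), IsRegEpi e → ∀ g : P ⟶ Y, ∃ h : P ⟶ X, h ≫ e = g

/-- `C` has enough regular projectives. -/
def EnoughRegularProjectives (C : Type u) [Category.{v} C] : Prop :=
  ∀ X : C, ∃ (P : C) (p : P ⟶ X), RegularProjective P ∧ IsRegEpi p

/-- A regular category: finitely complete, coequalizers of kernel pairs,
regular epimorphisms stable under pullback. -/
class IsRegularCategory (C : Type u) [Category.{v} C] [HasFiniteLimits C] : Prop where
  hasCoequalizersOfKernelPairs :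
    ∀ {X Y : C} (f : X ⟶ Y), HasColimit (parallelPair (pullback.fst f f) (pullback.snd f f))
  regularEpiPullbackStable :
    ∀ {X Y Z : C} (f : X ⟶ Y) (g : Z ⟶ Y), IsRegEpi f → IsRegEpi (pullback.snd f g)

/-- A semi-abelian category (relative to ambient pointedness and finite completeness):
Barr-exact, Bourn-protomodular, with binary coproducts and a zero object. -/
class IsSemiAbelian (C : Type u) [Category.{v} C] [HasZeroMorphisms C] [HasFiniteLimits C] :
    Prop where
  hasZeroObject : HasZeroObject C
  hasBinaryCoproducts : HasBinaryCoproducts C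
  hasCoequalizersOfKernelPairs :
    ∀ {X Y : C} (f : X ⟶ Y), HasColimit (parallelPair (pullback.fst f f) (pullback.snd f f))
  regularEpiPullbackStable :
    ∀ {X Y Z : C} (f : X ⟶ Y) (g : Z ⟶ Y), IsRegEpi f → IsRegEpi (pullback.snd f g)
  /-- Barr-exactness: every internal equivalence relation is a kernel pair. -/
  exactEquivalenceRelations :
    ∀ {R X : C} (r₀ r₁ : R ⟶ X),
      (∀ {T : C} (a b : T ⟶ R), a ≫ r₀ = b ≫ r₀ → a ≫ r₁ = b ≫ r₁ → a = b) →
      (∀ T : C, _root_.Equivalence fun x y : T ⟶ X => ∃ t : T ⟶ R, t ≫ r₀ = x ∧ t ≫ r₁ = y) →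
      ∃ (Y : C) (f : X ⟶ Y), IsKernelPair f r₀ r₁
  /-- Bourn-protomodularity: the Short Five Lemma. -/
  protomodular :
    ∀ {E' B' E B : C} (p' : E' ⟶ B') (p : E ⟶ B), IsRegEpi p' → IsRegEpi p →
      ∀ (v : E' ⟶ E) (w : B' ⟶ B), p' ≫ w = v ≫ p →
      ∀ u : kernel p' ⟶ kernel p, u ≫ kernel.ι p = kernel.ι p' ≫ v →
      IsIso u → IsIso w → IsIso v


end Base

section MoorePart

variable {C : Type u} [Category.{v} C] [HasZeroMorphisms C] [HasFiniteLimits C]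

namespace Moore

variable (X : SimplicialObject C)

/-- The `n`-th object of the Moore complex of `X`:
the intersection of the kernels of `∂ᵢ : Xₙ ⟶ X_{n-1}` for `0 ≤ i ≤ n-1`. -/
def NSub : ∀ n : ℕ, Subobject (X _⦋n⦌) := fun n => match n with
  | 0 => ⊤
  | n + 1 => Finset.univ.inf fun k : Fin (n + 1) => kernelSubobject (X.δ k.castSucc)

/-- The `n`-th object of the Moore complex, as an object of `C`. -/
def NObj (n : ℕ) : C := (NSub X n : C)

theorem arrow_comp_δ_castSucc (n : ℕ) (i : Fin (n + 1)) :
    (NSub X (n + 1)).arrow ≫ X.δ i.castSucc = 0 := by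
  show (Finset.univ.inf fun k : Fin (n + 1) =>
      kernelSubobject (X.δ k.castSucc)).arrow ≫ X.δ i.castSucc = 0
  rw [← factorThru_arrow _ _ (finset_inf_arrow_factors Finset.univ
      (fun k : Fin (n + 1) => kernelSubobject (X.δ k.castSucc)) i (Finset.mem_univ _)),
    Category.assoc, kernelSubobject_arrow_comp, comp_zero]

/-- The differential `dₙ₊₁ : Nₙ₊₁X ⟶ NₙX` of the Moore complex, induced by the
last face `∂ₙ₊₁`. -/
def MooreD : ∀ n : ℕ, NObj X (n + 1) ⟶ NObj X n := fun n => match n with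
  | 0 => (NSub X 1).arrow ≫ X.δ (Fin.last 1) ≫ inv (I := isIso_top_arrow) (⊤ : Subobject (X _⦋0⦌)).arrow
  | n + 1 =>
    factorThru _ ((NSub X (n + 2)).arrow ≫ X.δ (Fin.last (n + 2))) (by
      refine (finset_inf_factors _).mpr fun i _ => ?_
      apply kernelSubobject_factors
      change ((NSub X (n + 2)).arrow ≫ X.δ (Fin.last (n + 2))) ≫ X.δ i.castSucc = 0
      rw [Category.assoc,
        show X.δ (Fin.last (n + 2)) = X.δ ((Fin.last (n + 1)).succ) from by rw [Fin.succ_last],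
        X.δ_comp_δ (Fin.le_last i.castSucc), ← Category.assoc,
        arrow_comp_δ_castSucc, zero_comp])

theorem d_squared (n : ℕ) : MooreD X (n + 1) ≫ MooreD X n = 0 := by
  rcases n with _ | n <;> dsimp [MooreD, NObj]
  · erw [factorThru_arrow_assoc,
      show X.δ (Fin.last 2) = X.δ ((Fin.last 1).succ) from by rw [Fin.succ_last],
      Category.assoc, X.δ_comp_δ_assoc (le_refl (Fin.last 1)), ← Category.assoc,
      arrow_comp_δ_castSucc, zero_comp]
    rfl
  · apply (cancel_mono (NSub X (n + 1)).arrow).1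
    erw [Category.assoc, factorThru_arrow, factorThru_arrow_assoc,
      show X.δ (Fin.last (n + 3)) = X.δ ((Fin.last (n + 2)).succ) from by rw [Fin.succ_last],
      Category.assoc, X.δ_comp_δ (le_refl (Fin.last (n + 2))), ← Category.assoc,
      arrow_comp_δ_castSucc, zero_comp, zero_comp]

variable [HasCokernels C]

/-- The homology `HₙX` of the Moore complex of `X`:
the cokernel of the factorization of `dₙ₊₁` through the kernel of `dₙ`. -/
def H : ℕ → C := fun n => match n with
  | 0 => cokernel (MooreD X 0)
  | n + 1 => cokernel (kernel.lift (MooreD X n) (MooreD X (n + 1)) (d_squared X n))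

/-- The object of `n`-cycles `ZₙX = ⋂_{i ∈ [n]} K[∂ᵢ]`
(realized as `X₀` for `n = 0` and as the kernel of `dₙ` for `n ≥ 1`). -/
def Z : ℕ → C := fun n => match n with
  | 0 => X _⦋0⦌
  | n + 1 => kernel (MooreD X n)

/-- The monomorphism `ZₙX ⟶ Xₙ`. -/
def zArrow : ∀ n : ℕ, Z X n ⟶ X _⦋n⦌
  | 0 => 𝟙 _
  | n + 1 => kernel.ι (MooreD X n) ≫ (NSub X (n + 1)).arrow

/-- The canonical quotient map `qₙ : ZₙX ⟶ HₙX`. -/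
def q : ∀ n : ℕ, Z X n ⟶ H X n := fun n => match n with
  | 0 => inv (I := isIso_top_arrow) (⊤ : Subobject (X _⦋0⦌)).arrow ≫ cokernel.π (MooreD X 0)
  | n + 1 => cokernel.π (kernel.lift (MooreD X n) (MooreD X (n + 1)) (d_squared X n))

end Moore

end MoorePart

section NablaPart

variable {C : Type u} [Category.{v} C] [HasFiniteLimits C]

namespace Nabla

/-- Pairs `i < j` in `[n+2]`. -/
def PairIdx (n : ℕ) : Type := {p : Fin (n + 3) × Fin (n + 3) // p.1 < p.2}

instance (n : ℕ) : Fintype (PairIdx n) := by unfold PairIdx; infer_instance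

variable (X : SimplicialObject C)

/-- The object `∇ₙX` of `n`-cycles: `∇₀X = X₀ × X₀`, and for `n ≥ 1`, the subobject of
`Xₙ^{n+2}` of tuples `(x₀, …, x_{n+1})` with `∂ᵢ ∘ xⱼ = ∂_{j-1} ∘ xᵢ` for `i < j` in `[n+1]`. -/
def obj : ℕ → C := fun n => match n with
  | 0 => Limits.prod (X _⦋0⦌) (X _⦋0⦌)
  | n + 1 =>
    equalizer
      (Pi.lift fun p : PairIdx n =>
        Pi.π (fun _ : Fin (n + 3) => X _⦋n + 1⦌) p.1.2 ≫
          X.δ (⟨p.1.1, by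
            have h1 : (p.1.1 : ℕ) < (p.1.2 : ℕ) := p.2
            have h2 : (p.1.2 : ℕ) < n + 3 := p.1.2.isLt
            omega⟩ : Fin (n + 2)))
      (Pi.lift fun p : PairIdx n =>
        Pi.π (fun _ : Fin (n + 3) => X _⦋n + 1⦌) p.1.1 ≫
          X.δ (⟨(p.1.2 : ℕ) - 1, by
            have h2 : (p.1.2 : ℕ) < n + 3 := p.1.2.isLt
            omega⟩ : Fin (n + 2)))

/-- The projection `prᵢ : ∇ₙX ⟶ Xₙ`. -/
def pr : ∀ (n : ℕ) (_ : Fin (n + 2)), obj X n ⟶ X _⦋n⦌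
  | 0, i => if i = 0 then Limits.prod.fst else Limits.prod.snd
  | n + 1, i => equalizer.ι _ _ ≫ Pi.π (fun _ : Fin (n + 3) => X _⦋n + 1⦌) i

/-- The object `∇ₙ(X⁻)`, where `X⁻` is the shifted simplicial object with
`(X⁻)ₙ = X_{n+1}` and `∂ᵢ⁻ = ∂_{i+1}`. -/
def shiftObj : ℕ → C := fun n => match n with
  | 0 => Limits.prod (X _⦋1⦌) (X _⦋1⦌)
  | n + 1 =>
    equalizer
      (Pi.lift fun p : PairIdx n =>
        Pi.π (fun _ : Fin (n + 3) => X _⦋n + 2⦌) p.1.2 ≫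
          X.δ (⟨(p.1.1 : ℕ) + 1, by
            have h1 : (p.1.1 : ℕ) < (p.1.2 : ℕ) := p.2
            have h2 : (p.1.2 : ℕ) < n + 3 := p.1.2.isLt
            omega⟩ : Fin (n + 3)))
      (Pi.lift fun p : PairIdx n =>
        Pi.π (fun _ : Fin (n + 3) => X _⦋n + 2⦌) p.1.1 ≫
          X.δ (⟨(p.1.2 : ℕ), by
            have h2 : (p.1.2 : ℕ) < n + 3 := p.1.2.isLt
            omega⟩ : Fin (n + 3)))

/-- The projection `prᵢ : ∇ₙ(X⁻) ⟶ X_{n+1}`. -/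
def shiftPr : ∀ (n : ℕ) (_ : Fin (n + 2)), shiftObj X n ⟶ X _⦋n + 1⦌
  | 0, i => if i = 0 then Limits.prod.fst else Limits.prod.snd
  | n + 1, i => equalizer.ι _ _ ≫ Pi.π (fun _ : Fin (n + 3) => X _⦋n + 2⦌) i

end Nabla

end NablaPart

section HornPart

variable {C : Type u} [Category.{v} C]


/-- An `(n+1, k)`-horn of a simplicial object `A` with vertex of definition `X`:
a family `xᵢ : X ⟶ Aₙ` (`i ≠ k`) with `∂ᵢ ∘ xⱼ = ∂_{j-1} ∘ xᵢ` for `i < j`, `i, j ≠ k`. -/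
structure HornData (A : SimplicialObject C) (n : ℕ) (k : Fin (n + 2)) (X : C) where
  x : ∀ i : Fin (n + 2), i ≠ k → (X ⟶ A _⦋n⦌)
  compat : ∀ (m : ℕ) (hm : n = m + 1) (i j : Fin (n + 2)) (hi : i ≠ k) (hj : j ≠ k)
      (hij : (i : ℕ) < (j : ℕ)),
      x j hj ≫ eqToHom (by rw [hm]) ≫ A.δ (⟨(i : ℕ), by
          have := j.isLt; omega⟩ : Fin (m + 2)) =
      x i hi ≫ eqToHom (by rw [hm]) ≫ A.δ (⟨(j : ℕ) - 1, by
          have := j.isLt; omega⟩ : Fin (m + 2))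

/-- `A` is Kan (internally, up to regular epimorphism). -/
def IsKanObject (A : SimplicialObject C) : Prop :=
  ∀ (n : ℕ) (k : Fin (n + 2)) (X : C) (h : HornData A n k X),
    ∃ (Y : C) (p : Y ⟶ X), IsRegEpi p ∧
      ∃ a : Y ⟶ A _⦋n + 1⦌, ∀ (i : Fin (n + 2)) (hi : i ≠ k), a ≫ A.δ i = p ≫ h.x i hi

/-- `f : A ⟶ B` is a Kan fibration (internally, up to regular epimorphism). -/
def IsKanFibration {A B : SimplicialObject C} (f : A ⟶ B) : Prop :=
  ∀ (n : ℕ) (k : Fin (n + 2)) (X : C) (h : HornData A n k X) (b : X ⟶ B _⦋n + 1⦌),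
    (∀ (i : Fin (n + 2)) (hi : i ≠ k), b ≫ B.δ i = h.x i hi ≫ f.app (op ⦋n⦌)) →
    ∃ (Y : C) (p : Y ⟶ X), IsRegEpi p ∧
      ∃ a : Y ⟶ A _⦋n + 1⦌, a ≫ f.app (op ⦋n + 1⦌) = p ≫ b ∧
        ∀ (i : Fin (n + 2)) (hi : i ≠ k), a ≫ A.δ i = p ≫ h.x i hi

/-- A simplicial set (simplicial object of `Type`) is a Kan complex. -/
def IsKanSSet (K : SimplicialObject (Type w)) : Prop :=
  ∀ (n : ℕ) (k : Fin (n + 2)) (x : ∀ i : Fin (n + 2), i ≠ k → K _⦋n⦌),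
    (∀ (m : ℕ) (hm : n = m + 1) (i j : Fin (n + 2)) (hi : i ≠ k) (hj : j ≠ k)
      (hij : (i : ℕ) < (j : ℕ)),
      K.δ (⟨(i : ℕ), by have := j.isLt; omega⟩ : Fin (m + 2)) (_root_.cast (show K _⦋n⦌ = K _⦋m+1⦌ by rw [hm]) (x j hj)) =
      K.δ (⟨(j : ℕ) - 1, by have := j.isLt; omega⟩ : Fin (m + 2))
        (_root_.cast (show K _⦋n⦌ = K _⦋m+1⦌ by rw [hm]) (x i hi))) →
    ∃ y : K _⦋n + 1⦌, ∀ (i : Fin (n + 2)) (hi : i ≠ k), K.δ i y = x i hi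

/-- A map of simplicial sets is a Kan fibration. -/
def IsKanFibrationSSet {K L : SimplicialObject (Type w)} (g : K ⟶ L) : Prop :=
  ∀ (n : ℕ) (k : Fin (n + 2)) (x : ∀ i : Fin (n + 2), i ≠ k → K _⦋n⦌),
    (∀ (m : ℕ) (hm : n = m + 1) (i j : Fin (n + 2)) (hi : i ≠ k) (hj : j ≠ k)
      (hij : (i : ℕ) < (j : ℕ)),
      K.δ (⟨(i : ℕ), by have := j.isLt; omega⟩ : Fin (m + 2)) (_root_.cast (show K _⦋n⦌ = K _⦋m+1⦌ by rw [hm]) (x j hj)) =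
      K.δ (⟨(j : ℕ) - 1, by have := j.isLt; omega⟩ : Fin (m + 2))
        (_root_.cast (show K _⦋n⦌ = K _⦋m+1⦌ by rw [hm]) (x i hi))) →
    ∀ b : L _⦋n + 1⦌,
      (∀ (i : Fin (n + 2)) (hi : i ≠ k), L.δ i b = g.app (op ⦋n⦌) (x i hi)) →
      ∃ a : K _⦋n + 1⦌, g.app (op ⦋n + 1⦌) a = b ∧
        ∀ (i : Fin (n + 2)) (hi : i ≠ k), K.δ i a = x i hi

/-- The simplicial set `hom(P, A)`. -/
def homSimplicial (P : C) (A : SimplicialObject C) : SimplicialObject (Type v) :=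
  A ⋙ coyoneda.obj (op P)

/-- The map of simplicial sets `hom(P, f)`. -/
def homSimplicialMap (P : C) {A B : SimplicialObject C} (f : A ⟶ B) :
    homSimplicial P A ⟶ homSimplicial P B :=
  Functor.whiskerRight f (coyoneda.obj (op P))


end HornPart

section SSetPart


variable {K L : SimplicialObject (Type w)}

/-- The iterated degeneracy `σ₀ⁿ(x)` of a vertex `x`. -/
def bpt (K : SimplicialObject (Type w)) (x : K _⦋0⦌) : ∀ n : ℕ, K _⦋n⦌
  | 0 => x
  | n + 1 => K.σ (0 : Fin (n + 1)) (bpt K x n)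

/-- `Zₙ(K, x)`: the `n`-simplices all of whose faces are the basepoint. -/
def SZ (K : SimplicialObject (Type w)) (x : K _⦋0⦌) : ℕ → Type w := fun n => match n with
  | 0 => K _⦋0⦌
  | n + 1 => { z : K.obj (op (SimplexCategory.mk (n + 1))) // ∀ i : Fin (n + 2), K.δ i z = bpt K x n }

/-- The underlying `n`-simplex of an element of `Zₙ(K, x)`. -/
def szVal {K : SimplicialObject (Type w)} {x : K _⦋0⦌} : ∀ {n : ℕ}, SZ K x n → K _⦋n⦌ := fun {n} z => match n, z with
  | 0, z => z
  | _ + 1, z => z.1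

/-- The homotopy relation on `Zₙ(K, x)`: `z ∼ z'` iff there is `y ∈ K_{n+1}` with
`∂ᵢ(y) = x` for `i < n`, `∂ₙ(y) = z` and `∂_{n+1}(y) = z'`. -/
def hRel (K : SimplicialObject (Type w)) (x : K _⦋0⦌) (n : ℕ) (z z' : SZ K x n) : Prop :=
  ∃ y : K _⦋n + 1⦌,
    (∀ i : Fin (n + 2), (i : ℕ) < n → K.δ i y = bpt K x n) ∧
    K.δ (⟨n, by omega⟩ : Fin (n + 2)) y = szVal z ∧
    K.δ (Fin.last (n + 1)) y = szVal z'

/-- The homotopy "group" `πₙ(K, x)` as a quotient set. -/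
def piSet (K : SimplicialObject (Type w)) (x : K _⦋0⦌) (n : ℕ) : Type w :=
  Quot (hRel K x n)

theorem δ_app (g : K ⟶ L) {n : ℕ} (i : Fin (n + 2)) (z : K _⦋n + 1⦌) :
    L.δ i (g.app (op ⦋n + 1⦌) z) = g.app (op ⦋n⦌) (K.δ i z) := by
  have := FunctorToTypes.naturality g (SimplexCategory.δ i).op z
  simpa [SimplicialObject.δ] using this.symm

theorem σ_app (g : K ⟶ L) {n : ℕ} (i : Fin (n + 1)) (z : K _⦋n⦌) :
    L.σ i (g.app (op ⦋n⦌) z) = g.app (op ⦋n + 1⦌) (K.σ i z) := by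
  have := FunctorToTypes.naturality g (SimplexCategory.σ i).op z
  simpa [SimplicialObject.σ] using this.symm

theorem bpt_app (g : K ⟶ L) (x : K _⦋0⦌) :
    ∀ n : ℕ, g.app (op ⦋n⦌) (bpt K x n) = bpt L (g.app (op ⦋0⦌) x) n := fun n => match n with
  | 0 => rfl
  | n + 1 => by rw [bpt, bpt, ← bpt_app g x n, σ_app]

/-- The map `Zₙ(K, x) → Zₙ(L, g(x))` induced by `g : K ⟶ L`. -/
def szMap (g : K ⟶ L) (x : K _⦋0⦌) : ∀ n : ℕ, SZ K x n → SZ L (g.app (op ⦋0⦌) x) n := fun n z => match n, z with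
  | 0, z => g.app (op ⦋0⦌) z
  | n + 1, z => ⟨g.app (op ⦋n + 1⦌) z.1, fun i => by
      rw [δ_app, z.2 i, bpt_app]⟩

theorem szVal_szMap (g : K ⟶ L) (x : K _⦋0⦌) :
    ∀ (n : ℕ) (z : SZ K x n), szVal (szMap g x n z) = g.app (op ⦋n⦌) (szVal z) := fun n z => match n, z with
  | 0, _ => rfl
  | _ + 1, _ => rfl

/-- The map `πₙ(K, x) → πₙ(L, g(x))` induced by `g : K ⟶ L`. -/
def piMap (g : K ⟶ L) (x : K _⦋0⦌) (n : ℕ) :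
    piSet K x n → piSet L (g.app (op ⦋0⦌) x) n :=
  Quot.map (szMap g x n) (by
    rintro z z' ⟨y, h1, h2, h3⟩
    refine ⟨g.app (op ⦋n + 1⦌) y, fun i hi => by rw [δ_app, h1 i hi, bpt_app], ?_, ?_⟩
    · rw [δ_app, h2, szVal_szMap]
    · rw [δ_app, h3, szVal_szMap])

/-- `g : K ⟶ L` is a weak equivalence of simplicial sets: it induces bijections on
all homotopy groups at all basepoints. -/
def IsWeakEquivalenceSSet (g : K ⟶ L) : Prop :=
  ∀ (n : ℕ) (x : K _⦋0⦌), Function.Bijective (piMap g x n)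


end SSetPart


section HMapPart
variable {C : Type u} [Category.{v} C] [HasZeroMorphisms C] [HasFiniteLimits C] [HasCokernels C]

/-- The data of the morphisms induced by a simplicial morphism `f : A ⟶ B` on Moore
complexes, on cycles, and on homology; each component is uniquely determined by the
stated compatibility. -/
structure HMapData {A B : SimplicialObject C} (f : A ⟶ B) where
  ν : ∀ n : ℕ, Moore.NObj A n ⟶ Moore.NObj B n
  hν : ∀ n : ℕ, ν n ≫ (Moore.NSub B n).arrow = (Moore.NSub A n).arrow ≫ f.app (op ⦋n⦌)
  κ : ∀ n : ℕ, kernel (Moore.MooreD A n) ⟶ kernel (Moore.MooreD B n)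
  hκ : ∀ n : ℕ, κ n ≫ kernel.ι (Moore.MooreD B n) = kernel.ι (Moore.MooreD A n) ≫ ν (n + 1)
  η : ∀ n : ℕ, Moore.H A n ⟶ Moore.H B n
  hη₀ : cokernel.π (Moore.MooreD A 0) ≫ η 0 = ν 0 ≫ cokernel.π (Moore.MooreD B 0)
  hη : ∀ n : ℕ,
    cokernel.π (kernel.lift (Moore.MooreD A n) (Moore.MooreD A (n + 1)) (Moore.d_squared A n)) ≫
        η (n + 1) =
      κ n ≫
        cokernel.π (kernel.lift (Moore.MooreD B n) (Moore.MooreD B (n + 1)) (Moore.d_squared B n))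

/-- `f` is a homology isomorphism. -/
def IsHomologyIso {A B : SimplicialObject C} (f : A ⟶ B) : Prop :=
  ∀ d : HMapData f, ∀ n : ℕ, IsIso (d.η n)

end HMapPart

/-!
Maps `P ⟶ Zₙ₊₁A` are the cycles of `hom(P, A)`, and a homotopy between two of them is a map from
`P` into the object `E` of `(n+2)`-simplices whose faces `∂₀, …, ∂ₙ` vanish. The faces
`u = ∂ₙ₊₁` and `v = ∂ₙ₊₂` make `E ⇉ Zₙ₊₁A` a reflexive graph with common section `σₙ₊₁`, the
kernel of `u` is `Nₙ₊₂A`, and `v` restricted to it is the boundary `d`.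

For such a graph in a semi-abelian category, the relation `{(v e, v e') | u e = u e'}` is an
equivalence relation (Mal'tsev), hence a kernel pair (Barr-exactness), and one reads off that
the image of `d` is normal. Protomodularity then shows that `(u, v)` maps `E` regularly onto the
kernel pair of `Zₙ₊₁A ⟶ Hₙ₊₁A`. Since `P` is regular projective, two cycles are therefore
homotopic iff they agree in `Hₙ₊₁A`, and every map `P ⟶ Hₙ₊₁A` lifts to a cycle.
-/

attribute [local simp] prod.lift_fst prod.lift_snd prod.lift_fst_assoc prod.lift_snd_assoc
  pullback.lift_fst pullback.lift_snd pullback.lift_fst_assoc pullback.lift_snd_assoc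
  image.fac image.fac_assoc

section RegularEpi

variable {C : Type u} [Category.{v} C]

theorem isRegEpi_iff_isRegularEpi {X Y : C} (f : X ⟶ Y) : IsRegEpi f ↔ IsRegularEpi f :=
  ⟨fun h => ⟨h⟩, fun h => h.1⟩

theorem isRegEpi_of_comp_eq_id {X Y : C} {p : X ⟶ Y} {s : Y ⟶ X} (hs : s ≫ p = 𝟙 Y) :
    IsRegEpi p := by
  have : IsSplitEpi p := IsSplitEpi.mk' ⟨s, hs⟩
  exact (isRegEpi_iff_isRegularEpi p).2 inferInstance

end RegularEpi

section Protomodular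

variable {C : Type u} [Category.{v} C] [HasZeroMorphisms C] [HasFiniteLimits C] [IsSemiAbelian C]

instance IsSemiAbelian.regular : Regular C where
  hasCoequalizer_of_isKernelPair {_ _ _ f _ _} h := by
    have := IsSemiAbelian.hasCoequalizersOfKernelPairs f
    exact hasColimit_of_iso (F := parallelPair (pullback.fst f f) (pullback.snd f f))
      (parallelPair.ext h.isoPullback (Iso.refl _) (by simp) (by simp))
  regularEpiIsStableUnderBaseChange :=
    .of_forall_exists_isPullback fun f g _ hg =>
      ⟨_, _, _, (IsPullback.of_hasPullback g f).flip,
        (isRegEpi_iff_isRegularEpi _).1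
          (IsSemiAbelian.regularEpiPullbackStable g f ((isRegEpi_iff_isRegularEpi g).2 hg))⟩

/-- Protomodularity: a subobject of the domain of a split epimorphism that contains the
section and the kernel is everything. -/
theorem isIso_of_mono_of_lift_section_of_lift_kernel {E B M : C} {p : E ⟶ B} {s : B ⟶ E}
    (hs : s ≫ p = 𝟙 B) (m : M ⟶ E) [Mono m] {s' : B ⟶ M} (hs' : s' ≫ m = s)
    {k' : kernel p ⟶ M} (hk' : k' ≫ m = kernel.ι p) : IsIso m := by
  let c : kernel (m ≫ p) ⟶ kernel p := kernel.lift p (kernel.ι (m ≫ p) ≫ m) (by simp)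
  have hc : IsIso c := ⟨kernel.lift (m ≫ p) k' (by simp [reassoc_of% hk']),
    by ext; simp [← cancel_mono m, c, hk'], by ext; simp [c, hk']⟩
  exact IsSemiAbelian.protomodular (m ≫ p) p
    (isRegEpi_of_comp_eq_id (s := s') (by rw [← Category.assoc, hs', hs]))
    (isRegEpi_of_comp_eq_id hs) m (𝟙 B) (by simp) c (kernel.lift_ι _ _ _) hc inferInstance

theorem exists_lift_of_lift_section_of_lift_kernel {E B R W : C} {p : E ⟶ B} {s : B ⟶ E}
    (hs : s ≫ p = 𝟙 B) (i : R ⟶ W) [Mono i] (g : E ⟶ W)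
    (hs' : ∃ a : B ⟶ R, a ≫ i = s ≫ g) (hk' : ∃ b : kernel p ⟶ R, b ≫ i = kernel.ι p ≫ g) :
    ∃ c : E ⟶ R, c ≫ i = g := by
  obtain ⟨a, ha⟩ := hs'
  obtain ⟨b, hb⟩ := hk'
  have := isIso_of_mono_of_lift_section_of_lift_kernel hs (pullback.snd i g)
    (pullback.lift_snd a s ha) (pullback.lift_snd b (kernel.ι p) hb)
  exact ⟨inv (pullback.snd i g) ≫ pullback.fst i g, by simp [pullback.condition]⟩

theorem hom_ext_of_section_of_kernel {E B W : C} {p : E ⟶ B} {s : B ⟶ E}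
    (hs : s ≫ p = 𝟙 B) {a b : E ⟶ W} (hsec : s ≫ a = s ≫ b)
    (hker : kernel.ι p ≫ a = kernel.ι p ≫ b) : a = b := by
  obtain ⟨c, hc⟩ := exists_lift_of_lift_section_of_lift_kernel hs (equalizer.ι a b) (𝟙 E)
    ⟨equalizer.lift s hsec, by simp⟩ ⟨equalizer.lift _ hker, by simp⟩
  calc a = c ≫ equalizer.ι a b ≫ a := by rw [reassoc_of% hc]
    _ = b := by rw [equalizer.condition, reassoc_of% hc]

/-- The Mal'tsev property of protomodular categories. -/
theorem relation_trans_of_refl {R X : C} (r₀ r₁ : R ⟶ X) [Mono (prod.lift r₀ r₁)] {δ : X ⟶ R}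
    (hδ₀ : δ ≫ r₀ = 𝟙 X) (hδ₁ : δ ≫ r₁ = 𝟙 X) {T : C} {x y z : T ⟶ X}
    (hxy : ∃ t : T ⟶ R, t ≫ r₀ = x ∧ t ≫ r₁ = y) (hyz : ∃ t : T ⟶ R, t ≫ r₀ = y ∧ t ≫ r₁ = z) :
    ∃ t : T ⟶ R, t ≫ r₀ = x ∧ t ≫ r₁ = z := by
  have hsec : pullback.lift (r₀ ≫ δ) (𝟙 R) (by simp [hδ₁]) ≫ pullback.snd r₁ r₀ = 𝟙 R := by
    simp
  have hker : kernel.ι (pullback.snd r₁ r₀) ≫ pullback.fst r₁ r₀ ≫ r₁ = 0 := by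
    rw [pullback.condition, kernel.condition_assoc, zero_comp]
  obtain ⟨χ, hχ⟩ := exists_lift_of_lift_section_of_lift_kernel hsec (prod.lift r₀ r₁)
    (prod.lift (pullback.fst r₁ r₀ ≫ r₀) (pullback.snd r₁ r₀ ≫ r₁))
    ⟨𝟙 R, by ext <;> simp [hδ₀]⟩
    ⟨kernel.ι _ ≫ pullback.fst r₁ r₀, by ext <;> simp [hker]⟩
  obtain ⟨t₁, rfl, ht₁⟩ := hxy
  obtain ⟨t₂, ht₂, rfl⟩ := hyz
  refine ⟨pullback.lift t₁ t₂ (ht₁.trans ht₂.symm) ≫ χ, ?_, ?_⟩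
  · simpa using pullback.lift t₁ t₂ (ht₁.trans ht₂.symm) ≫= hχ =≫ prod.fst
  · simpa using pullback.lift t₁ t₂ (ht₁.trans ht₂.symm) ≫= hχ =≫ prod.snd

theorem exists_isKernelPair_of_relation_refl_symm {R X : C} (r₀ r₁ : R ⟶ X)
    [Mono (prod.lift r₀ r₁)] {δ : X ⟶ R} (hδ₀ : δ ≫ r₀ = 𝟙 X) (hδ₁ : δ ≫ r₁ = 𝟙 X)
    (hsymm : ∀ {T : C} {x y : T ⟶ X},
      (∃ t : T ⟶ R, t ≫ r₀ = x ∧ t ≫ r₁ = y) → ∃ t : T ⟶ R, t ≫ r₀ = y ∧ t ≫ r₁ = x) :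
    ∃ (Y : C) (f : X ⟶ Y), IsKernelPair f r₀ r₁ :=
  IsSemiAbelian.exactEquivalenceRelations r₀ r₁
    (fun a b h₀ h₁ => (cancel_mono (prod.lift r₀ r₁)).1 (by ext <;> simp [h₀, h₁]))
    fun _ => ⟨fun x => ⟨x ≫ δ, by simp [hδ₀], by simp [hδ₁]⟩, hsymm,
      relation_trans_of_refl r₀ r₁ hδ₀ hδ₁⟩

end Protomodular

section ReflexiveGraph

variable {C : Type u} [Category.{v} C] [HasZeroMorphisms C] [HasFiniteLimits C]

structure IsReflexiveGraphKernel {N E Z : C} (u v : E ⟶ Z) (s : Z ⟶ E) (k : N ⟶ E) : Prop where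
  s_u : s ≫ u = 𝟙 Z
  s_v : s ≫ v = 𝟙 Z
  k_u : k ≫ u = 0
  exists_lift : ∀ {T : C} (x : T ⟶ E), x ≫ u = 0 → ∃ τ : T ⟶ N, τ ≫ k = x

abbrev kernelPairMap {E Z : C} (u v : E ⟶ Z) : pullback u u ⟶ Z ⨯ Z :=
  prod.lift (pullback.fst u u ≫ v) (pullback.snd u u ≫ v)

namespace IsReflexiveGraphKernel

variable [IsSemiAbelian C] {N E Z : C} {u v : E ⟶ Z} {s : Z ⟶ E} {k : N ⟶ E}

theorem comp_cokernel_π_eq (G : IsReflexiveGraphKernel u v s k) {d : N ⟶ Z} (hd : k ≫ v = d)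
    [HasCokernel d] : u ≫ cokernel.π d = v ≫ cokernel.π d := by
  subst hd
  obtain ⟨τ, hτ⟩ := G.exists_lift (kernel.ι u) (kernel.condition u)
  refine hom_ext_of_section_of_kernel G.s_u ?_ ?_
  · rw [reassoc_of% G.s_u, reassoc_of% G.s_v]
  · rw [← hτ, Category.assoc, reassoc_of% G.k_u, Category.assoc, ← Category.assoc k,
      cokernel.condition, zero_comp, comp_zero]

theorem exists_image_lift_of_comp_eq_zero (G : IsReflexiveGraphKernel u v s k) {T : C}
    {a b : T ⟶ E} (hab : a ≫ u = b ≫ u) (ha : a ≫ v = 0) :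
    ∃ w : T ⟶ image (k ≫ v), w ≫ image.ι (k ≫ v) = b ≫ v := by
  -- Protomodularity for `(e, e') ↦ e`, split by the diagonal, from the pairs with
  -- `u e = u e'` and `v e = 0` onto `ker v`: its kernel consists of pairs `(0, k x)`.
  let c : kernel (pullback.fst u u ≫ v) ⟶ kernel v :=
    kernel.lift v (kernel.ι _ ≫ pullback.fst u u) (by simp)
  let σ : kernel v ⟶ kernel (pullback.fst u u ≫ v) :=
    kernel.lift _ (pullback.lift (kernel.ι v) (kernel.ι v) rfl) (by simp)
  have hσ : σ ≫ c = 𝟙 _ := by ext; simp [c, σ]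
  have hker : (kernel.ι c ≫ kernel.ι _ ≫ pullback.snd u u) ≫ u = 0 := by
    have : kernel.ι _ ≫ pullback.fst u u = c ≫ kernel.ι v := (kernel.lift_ι _ _ _).symm
    rw [Category.assoc, Category.assoc, ← pullback.condition, reassoc_of% this,
      kernel.condition_assoc, zero_comp]
  obtain ⟨τ, hτ⟩ := G.exists_lift _ hker
  obtain ⟨w, hw⟩ := exists_lift_of_lift_section_of_lift_kernel hσ (image.ι (k ≫ v))
    (kernel.ι _ ≫ pullback.snd u u ≫ v) ⟨0, by simp [σ]⟩
    ⟨τ ≫ factorThruImage (k ≫ v), by simp [reassoc_of% hτ]⟩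
  exact ⟨kernel.lift _ (pullback.lift a b hab) (by simp [ha]) ≫ w, by simp [hw]⟩

theorem exists_isKernelPair (G : IsReflexiveGraphKernel u v s k) :
    ∃ (Y : C) (f : Z ⟶ Y), IsKernelPair f (image.ι (kernelPairMap u v) ≫ prod.fst)
      (image.ι (kernelPairMap u v) ≫ prod.snd) := by
  set φ := kernelPairMap u v
  have : Mono (prod.lift (image.ι φ ≫ prod.fst) (image.ι φ ≫ prod.snd)) := by
    rw [← prod.comp_lift, prod.lift_fst_snd, Category.comp_id]
    infer_instance
  let swap : pullback u u ⟶ pullback u u :=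
    pullback.lift (pullback.snd u u) (pullback.fst u u) pullback.condition.symm
  have sq : CommSq (swap ≫ factorThruImage φ) (factorThruImage φ) (image.ι φ)
      (image.ι φ ≫ prod.lift prod.snd prod.fst) := ⟨by ext <;> simp [φ, swap]⟩
  refine exists_isKernelPair_of_relation_refl_symm _ _
    (δ := s ≫ pullback.lift (𝟙 E) (𝟙 E) rfl ≫ factorThruImage φ) ?_ ?_ ?_
  · simp [φ, G.s_v]
  · simp [φ, G.s_v]
  · rintro T x y ⟨t, rfl, rfl⟩
    exact ⟨t ≫ sq.lift, by simp, by simp⟩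

theorem comp_eq_zero_of_isKernelPair (G : IsReflexiveGraphKernel u v s k) {Y : C}
    {f : Z ⟶ Y} (hf : IsKernelPair f (image.ι (kernelPairMap u v) ≫ prod.fst)
      (image.ι (kernelPairMap u v) ≫ prod.snd)) :
    (k ≫ v) ≫ f = 0 := by
  have h := (pullback.lift (f := u) (g := u) 0 k (by simp [G.k_u]) ≫
    factorThruImage (kernelPairMap u v)) ≫= hf.w
  simpa using h.symm

theorem exists_image_lift_kernel_ι (G : IsReflexiveGraphKernel u v s k) {Y : C}
    {f : Z ⟶ Y} (hf : IsKernelPair f (image.ι (kernelPairMap u v) ≫ prod.fst)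
      (image.ι (kernelPairMap u v) ≫ prod.snd)) :
    ∃ w : kernel f ⟶ image (k ≫ v), w ≫ image.ι (k ≫ v) = kernel.ι f := by
  set φ := kernelPairMap u v
  let t : kernel f ⟶ image φ := hf.lift 0 (kernel.ι f) (by simp)
  have ht : t ≫ image.ι φ = prod.lift 0 (kernel.ι f) := by ext <;> simp [t]
  have hφ : pullback.fst (factorThruImage φ) t ≫ φ
      = pullback.snd (factorThruImage φ) t ≫ prod.lift 0 (kernel.ι f) := by
    rw [← ht, ← pullback.condition_assoc, image.fac]
  obtain ⟨w, hw⟩ := G.exists_image_lift_of_comp_eq_zero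
    (a := pullback.fst _ _ ≫ pullback.fst u u) (b := pullback.fst _ _ ≫ pullback.snd u u)
    (by simp [pullback.condition]) (by simpa [φ] using hφ =≫ prod.fst)
  have sq : CommSq w (pullback.snd (factorThruImage φ) t) (image.ι (k ≫ v)) (kernel.ι f) :=
    ⟨by rw [hw]; simpa [φ] using hφ =≫ prod.snd⟩
  exact ⟨sq.lift, sq.fac_right⟩

theorem exists_image_lift_kernel_cokernel (G : IsReflexiveGraphKernel u v s k)
    [HasCokernel (k ≫ v)] :
    ∃ w : kernel (cokernel.π (k ≫ v)) ⟶ image (k ≫ v),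
      w ≫ image.ι (k ≫ v) = kernel.ι (cokernel.π (k ≫ v)) := by
  obtain ⟨Y, f, hf⟩ := G.exists_isKernelPair
  obtain ⟨w, hw⟩ := G.exists_image_lift_kernel_ι hf
  have hπf : kernel.ι (cokernel.π (k ≫ v)) ≫ f = 0 := by
    rw [← cokernel.π_desc (k ≫ v) f (G.comp_eq_zero_of_isKernelPair hf), kernel.condition_assoc,
      zero_comp]
  exact ⟨kernel.lift f _ hπf ≫ w, by simp [hw]⟩

/-- A subobject of the kernel pair of `π` through which `(u, v)` factors contains the diagonal
(through `s`) and, `ker π` being covered by `k`, the kernel of the first projection; by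
protomodularity it is everything. -/
theorem isRegularEpi_lift_of_kernel_factors (G : IsReflexiveGraphKernel u v s k) {Q : C}
    {π : Z ⟶ Q} (h : u ≫ π = v ≫ π) (hπ : (k ≫ v) ≫ π = 0)
    (hker : ∃ w : kernel π ⟶ image (k ≫ v), w ≫ image.ι (k ≫ v) = kernel.ι π) :
    IsRegularEpi (pullback.lift u v h) := by
  obtain ⟨w, hw⟩ := hker
  have hιπ : image.ι (k ≫ v) ≫ π = 0 := by
    rw [← cancel_epi (factorThruImage (k ≫ v)), image.fac_assoc, hπ, comp_zero]
  have hdiag : pullback.lift (𝟙 Z) (𝟙 Z) rfl ≫ pullback.fst π π = 𝟙 Z := by simp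
  let z : kernel (pullback.fst π π) ⟶ kernel π :=
    kernel.lift π (kernel.ι _ ≫ pullback.snd π π) (by
      rw [Category.assoc, ← pullback.condition, kernel.condition_assoc, zero_comp])
  have : ExtremalEpi (pullback.lift u v h) :=
    ExtremalEpi.mk_of_hasEqualizers _ fun M p i hpi _ => by
      have sq : CommSq (k ≫ p) (factorThruImage (k ≫ v)) i
          (pullback.lift 0 (image.ι (k ≫ v)) (by simp [hιπ])) :=
        ⟨by ext <;> simp [hpi, G.k_u]⟩
      obtain ⟨c, hc⟩ := exists_lift_of_lift_section_of_lift_kernel hdiag i (𝟙 _)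
        ⟨s ≫ p, by ext <;> simp [hpi, G.s_u, G.s_v]⟩
        ⟨z ≫ w ≫ sq.lift, by ext <;> simp [z, hw]⟩
      exact ⟨c, by rw [← cancel_mono i]; simp [hc], hc⟩
  infer_instance

theorem isRegularEpi_lift (G : IsReflexiveGraphKernel u v s k) {d : N ⟶ Z} (hd : k ≫ v = d)
    [HasCokernel d] : IsRegularEpi (pullback.lift u v (G.comp_cokernel_π_eq hd)) := by
  subst hd
  exact G.isRegularEpi_lift_of_kernel_factors _ (cokernel.condition _)
    G.exists_image_lift_kernel_cokernel

end IsReflexiveGraphKernel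

end ReflexiveGraph

namespace Moore

variable {C : Type u} [Category.{v} C] [HasZeroMorphisms C] [HasFiniteLimits C]
  (A : SimplicialObject C)

theorem nSub_factors {T : C} {n : ℕ} {w : T ⟶ A _⦋n + 1⦌}
    (hw : ∀ i : Fin (n + 1), w ≫ A.δ i.castSucc = 0) : (NSub A (n + 1)).Factors w :=
  (finset_inf_factors _).mpr fun i _ => kernelSubobject_factors _ _ (hw i)

theorem arrow_comp_δ_last (n : ℕ) :
    (NSub A (n + 1)).arrow ≫ A.δ (Fin.last (n + 1)) = MooreD A n ≫ (NSub A n).arrow := by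
  cases n with
  | zero =>
    change _ = (_ ≫ _ ≫ inv (⊤ : Subobject (A _⦋0⦌)).arrow) ≫ (⊤ : Subobject (A _⦋0⦌)).arrow
    simp
  | succ n => simp only [MooreD]; exact (factorThru_arrow _ _ _).symm

instance mono_zArrow (n : ℕ) : Mono (zArrow A (n + 1)) :=
  @mono_comp _ _ _ _ _ (kernel.ι (MooreD A n)) _ (NSub A (n + 1)).arrow (arrow_mono _)

theorem zArrow_succ_comp {W : C} (n : ℕ) (g : A _⦋n + 1⦌ ⟶ W) :
    zArrow A (n + 1) ≫ g = kernel.ι (MooreD A n) ≫ (NSub A (n + 1)).arrow ≫ g :=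
  Category.assoc _ _ _

theorem zArrow_comp_δ (n : ℕ) (i : Fin (n + 2)) : zArrow A (n + 1) ≫ A.δ i = 0 := by
  rw [zArrow_succ_comp]
  induction i using Fin.lastCases with
  | last => erw [arrow_comp_δ_last, kernel.condition_assoc, zero_comp]; rfl
  | cast j => erw [arrow_comp_δ_castSucc, comp_zero]; rfl

def liftZ {T : C} (n : ℕ) (w : T ⟶ A _⦋n + 1⦌) (hw : ∀ i : Fin (n + 2), w ≫ A.δ i = 0) :
    T ⟶ Z A (n + 1) :=
  kernel.lift (MooreD A n) ((NSub A (n + 1)).factorThru w (nSub_factors A fun i => hw _)) <|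
    (cancel_mono (NSub A n).arrow).1 <| by
      erw [Category.assoc, ← arrow_comp_δ_last, factorThru_arrow_assoc, hw, zero_comp]

@[simp]
theorem liftZ_zArrow {T : C} (n : ℕ) (w : T ⟶ A _⦋n + 1⦌)
    (hw : ∀ i : Fin (n + 2), w ≫ A.δ i = 0) : liftZ A n w hw ≫ zArrow A (n + 1) = w := by
  erw [zArrow, liftZ, ← Category.assoc, kernel.lift_ι, factorThru_arrow]

def toCycles (n : ℕ) : NObj A (n + 2) ⟶ Z A (n + 1) :=
  kernel.lift (MooreD A n) (MooreD A (n + 1)) (d_squared A n)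

variable (n : ℕ)

def lowerFacesKernel : Subobject (A _⦋n + 2⦌) :=
  Finset.univ.inf fun l : Fin (n + 1) => kernelSubobject (A.δ l.castSucc.castSucc)

theorem lowerFacesKernel_factors_iff {T : C} (y : T ⟶ A _⦋n + 2⦌) :
    (lowerFacesKernel A n).Factors y ↔ ∀ l : Fin (n + 1), y ≫ A.δ l.castSucc.castSucc = 0 := by
  rw [lowerFacesKernel, finset_inf_factors]
  simp only [Finset.mem_univ, forall_const, kernelSubobject_factors_iff]

theorem lowerFacesKernel_arrow_comp_δ (l : Fin (n + 1)) :
    (lowerFacesKernel A n).arrow ≫ A.δ l.castSucc.castSucc = 0 :=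
  (lowerFacesKernel_factors_iff A n _).1 (factors_self _) l

/-- Homotopies between `(n+1)`-cycles: simplices `y ∈ Aₙ₊₂` with `∂ᵢ y = 0` for `i ≤ n`,
together with the cycle `∂ₙ₊₁ y`. -/
abbrev homotopyObj : C :=
  pullback ((lowerFacesKernel A n).arrow ≫ A.δ (Fin.last (n + 1)).castSucc) (zArrow A (n + 1))

def homotopyι : homotopyObj A n ⟶ A _⦋n + 2⦌ := pullback.fst _ _ ≫ (lowerFacesKernel A n).arrow

def homotopySource : homotopyObj A n ⟶ Z A (n + 1) := pullback.snd _ _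

instance : Mono (homotopyι A n) := by
  unfold homotopyι
  infer_instance

theorem homotopyι_comp_δ (l : Fin (n + 1)) : homotopyι A n ≫ A.δ l.castSucc.castSucc = 0 := by
  simp [homotopyι, lowerFacesKernel_arrow_comp_δ]

theorem homotopySource_zArrow :
    homotopySource A n ≫ zArrow A (n + 1) = homotopyι A n ≫ A.δ (Fin.last (n + 1)).castSucc := by
  simp [homotopySource, homotopyι, pullback.condition]

theorem homotopyι_comp_δ_last_comp_δ (i : Fin (n + 2)) :
    (homotopyι A n ≫ A.δ (Fin.last (n + 2))) ≫ A.δ i = 0 := by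
  induction i using Fin.lastCases with
  | last =>
    have h := A.δ_comp_δ_self' (i := Fin.last (n + 1)) (j := (Fin.last (n + 1)).castSucc) rfl
    rw [Fin.succ_last] at h
    rw [Category.assoc, ← h, ← Category.assoc, ← homotopySource_zArrow, Category.assoc,
      zArrow_comp_δ, comp_zero]
  | cast l =>
    have h := A.δ_comp_δ (i := l.castSucc) (j := Fin.last (n + 1)) (Fin.le_last _)
    rw [Fin.succ_last] at h
    rw [Category.assoc, h, reassoc_of% homotopyι_comp_δ, zero_comp]

def homotopyTarget : homotopyObj A n ⟶ Z A (n + 1) :=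
  liftZ A n _ (homotopyι_comp_δ_last_comp_δ A n)

theorem homotopyTarget_zArrow :
    homotopyTarget A n ≫ zArrow A (n + 1) = homotopyι A n ≫ A.δ (Fin.last (n + 2)) :=
  liftZ_zArrow _ _ _ _

theorem zArrow_comp_σ_last_comp_δ (l : Fin (n + 1)) :
    (zArrow A (n + 1) ≫ A.σ (Fin.last (n + 1))) ≫ A.δ l.castSucc.castSucc = 0 := by
  have h := A.δ_comp_σ_of_le (i := l.castSucc) (j := Fin.last n)
    (Fin.castSucc_le_castSucc_iff.2 (Fin.le_last l))
  rw [Fin.succ_last] at h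
  rw [Category.assoc, h, ← Category.assoc, zArrow_comp_δ, zero_comp]

def constHomotopy : Z A (n + 1) ⟶ homotopyObj A n :=
  pullback.lift ((lowerFacesKernel A n).factorThru _
    ((lowerFacesKernel_factors_iff A n _).2 (zArrow_comp_σ_last_comp_δ A n))) (𝟙 _)
    (by simp [A.δ_comp_σ_self])

theorem constHomotopy_ι :
    constHomotopy A n ≫ homotopyι A n = zArrow A (n + 1) ≫ A.σ (Fin.last (n + 1)) := by
  simp [constHomotopy, homotopyι]

theorem constHomotopy_source : constHomotopy A n ≫ homotopySource A n = 𝟙 _ :=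
  pullback.lift_snd _ _ _

theorem constHomotopy_target : constHomotopy A n ≫ homotopyTarget A n = 𝟙 _ := by
  rw [← cancel_mono (zArrow A (n + 1)), Category.assoc, homotopyTarget_zArrow,
    reassoc_of% constHomotopy_ι, A.δ_comp_σ_succ' (Fin.succ_last _).symm, Category.comp_id,
    Category.id_comp]

/-- Elements of `Nₙ₊₂A` are homotopies from `0` to their boundary. -/
def mooreHomotopy : NObj A (n + 2) ⟶ homotopyObj A n :=
  pullback.lift ((lowerFacesKernel A n).factorThru (NSub A (n + 2)).arrow
    ((lowerFacesKernel_factors_iff A n _).2 fun l => arrow_comp_δ_castSucc A (n + 1) l.castSucc))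
    0 (by
      erw [factorThru_arrow_assoc, zero_comp]
      exact arrow_comp_δ_castSucc A (n + 1) (Fin.last (n + 1)))

theorem mooreHomotopy_ι : mooreHomotopy A n ≫ homotopyι A n = (NSub A (n + 2)).arrow := by
  erw [mooreHomotopy, homotopyι, pullback.lift_fst_assoc, factorThru_arrow]

theorem mooreHomotopy_source : mooreHomotopy A n ≫ homotopySource A n = 0 :=
  pullback.lift_snd _ _ _

theorem mooreHomotopy_target : mooreHomotopy A n ≫ homotopyTarget A n = toCycles A n := by
  apply (cancel_mono (zArrow A (n + 1))).1
  rw [Category.assoc, homotopyTarget_zArrow, reassoc_of% mooreHomotopy_ι]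
  erw [zArrow, ← Category.assoc, toCycles, kernel.lift_ι, ← arrow_comp_δ_last]
  rfl

theorem isReflexiveGraphKernel_homotopy :
    IsReflexiveGraphKernel (homotopySource A n) (homotopyTarget A n) (constHomotopy A n)
      (mooreHomotopy A n) where
  s_u := constHomotopy_source A n
  s_v := constHomotopy_target A n
  k_u := mooreHomotopy_source A n
  exists_lift x hx := by
    have hfaces : ∀ l : Fin (n + 2), (x ≫ homotopyι A n) ≫ A.δ l.castSucc = 0 := by
      intro l
      induction l using Fin.lastCases with
      | last => rw [Category.assoc, ← homotopySource_zArrow, reassoc_of% hx, zero_comp]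
      | cast l => rw [Category.assoc, homotopyι_comp_δ, comp_zero]
    refine ⟨(NSub A (n + 2)).factorThru _ (nSub_factors A hfaces), ?_⟩
    apply (cancel_mono (homotopyι A n)).1
    erw [Category.assoc, mooreHomotopy_ι, factorThru_arrow]

theorem exists_homotopy_lift {T : C} (y : T ⟶ A _⦋n + 2⦌)
    (hy : ∀ l : Fin (n + 1), y ≫ A.δ l.castSucc.castSucc = 0) (g : T ⟶ Z A (n + 1))
    (hg : g ≫ zArrow A (n + 1) = y ≫ A.δ (Fin.last (n + 1)).castSucc) :
    ∃ h : T ⟶ homotopyObj A n, h ≫ homotopyι A n = y ∧ h ≫ homotopySource A n = g :=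
  ⟨pullback.lift ((lowerFacesKernel A n).factorThru y ((lowerFacesKernel_factors_iff A n y).2 hy))
    g (by simp [hg]), by simp [homotopyι], pullback.lift_snd _ _ _⟩

end Moore

section HomotopyGroup

open Moore

variable {C : Type u} [Category.{v} C] [HasZeroMorphisms C]

theorem bpt_homSimplicial_zero (P : C) (A : SimplicialObject C) (m : ℕ) :
    bpt (homSimplicial P A) (0 : P ⟶ A _⦋0⦌) m = (0 : P ⟶ A _⦋m⦌) := by
  induction m with
  | zero => rfl
  | succ m ih =>
    change bpt (homSimplicial P A) (0 : P ⟶ A _⦋0⦌) m ≫ A.σ 0 = 0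
    rw [ih, zero_comp]

variable {P : C} {A : SimplicialObject C} {n : ℕ}

theorem szVal_comp_δ (z : SZ (homSimplicial P A) (0 : P ⟶ A _⦋0⦌) (n + 1)) (i : Fin (n + 2)) :
    szVal z ≫ A.δ i = 0 :=
  (z.2 i).trans (bpt_homSimplicial_zero P A n)

variable [HasFiniteLimits C]

def toCycle (z : SZ (homSimplicial P A) (0 : P ⟶ A _⦋0⦌) (n + 1)) : P ⟶ Z A (n + 1) :=
  liftZ A n (szVal z) (szVal_comp_δ z)

theorem toCycle_zArrow (z : SZ (homSimplicial P A) (0 : P ⟶ A _⦋0⦌) (n + 1)) :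
    toCycle z ≫ zArrow A (n + 1) = szVal z :=
  liftZ_zArrow _ _ _ _

theorem eq_toCycle {z : SZ (homSimplicial P A) (0 : P ⟶ A _⦋0⦌) (n + 1)}
    {g : P ⟶ Z A (n + 1)} (hg : g ≫ zArrow A (n + 1) = szVal z) : g = toCycle z :=
  (cancel_mono _).1 (hg.trans (toCycle_zArrow z).symm)

theorem hRel_iff_exists_homotopy {z z' : SZ (homSimplicial P A) (0 : P ⟶ A _⦋0⦌) (n + 1)} :
    hRel (homSimplicial P A) (0 : P ⟶ A _⦋0⦌) (n + 1) z z' ↔ ∃ y : P ⟶ homotopyObj A n,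
      y ≫ homotopySource A n = toCycle z ∧ y ≫ homotopyTarget A n = toCycle z' := by
  constructor
  · rintro ⟨y, hlow, hz, hz'⟩
    obtain ⟨h, hι, hs⟩ := exists_homotopy_lift A n y
      (fun l => (hlow _ (by simpa using l.is_le)).trans (bpt_homSimplicial_zero P A (n + 1)))
      (toCycle z) ((toCycle_zArrow z).trans hz.symm)
    refine ⟨h, hs, (cancel_mono (zArrow A (n + 1))).1 ?_⟩
    rw [Category.assoc, homotopyTarget_zArrow, reassoc_of% hι, toCycle_zArrow]
    exact hz'
  · rintro ⟨y, hs, ht⟩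
    refine ⟨y ≫ homotopyι A n, fun i hi => ?_, ?_, ?_⟩
    · obtain ⟨l, rfl⟩ : ∃ l : Fin (n + 1), i = l.castSucc.castSucc := ⟨⟨i, hi⟩, Fin.ext rfl⟩
      refine Eq.trans (?_ : (y ≫ homotopyι A n) ≫ A.δ l.castSucc.castSucc = 0)
        (bpt_homSimplicial_zero P A (n + 1)).symm
      rw [Category.assoc, homotopyι_comp_δ, comp_zero]
    · change (y ≫ homotopyι A n) ≫ A.δ (Fin.last (n + 1)).castSucc = szVal z
      rw [Category.assoc, ← homotopySource_zArrow, ← Category.assoc, hs, toCycle_zArrow]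
    · change (y ≫ homotopyι A n) ≫ A.δ (Fin.last (n + 2)) = szVal z'
      rw [Category.assoc, ← homotopyTarget_zArrow, ← Category.assoc, ht, toCycle_zArrow]

variable [IsSemiAbelian C] [HasCokernels C]

variable (A n) in
theorem homotopySource_comp_q :
    homotopySource A n ≫ q A (n + 1) = homotopyTarget A n ≫ q A (n + 1) :=
  (isReflexiveGraphKernel_homotopy A n).comp_cokernel_π_eq (mooreHomotopy_target A n)

variable (A n) in
theorem isRegularEpi_lift_homotopySource_homotopyTarget :
    IsRegularEpi (pullback.lift _ _ (homotopySource_comp_q A n)) :=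
  (isReflexiveGraphKernel_homotopy A n).isRegularEpi_lift (mooreHomotopy_target A n)

variable (P A n) in
def toHomology : piSet (homSimplicial P A) (0 : P ⟶ A _⦋0⦌) (n + 1) → (P ⟶ H A (n + 1)) :=
  Quot.lift (fun z => toCycle z ≫ q A (n + 1)) fun _ _ h => by
    obtain ⟨y, hs, ht⟩ := hRel_iff_exists_homotopy.1 h
    rw [← hs, ← ht, Category.assoc, Category.assoc, homotopySource_comp_q]

theorem toHomology_injective (hP : RegularProjective P) :
    Function.Injective (toHomology P A n) := by
  rintro ⟨z⟩ ⟨z'⟩ (h : toCycle z ≫ q A (n + 1) = toCycle z' ≫ q A (n + 1))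
  obtain ⟨y, hy⟩ := hP _ ((isRegEpi_iff_isRegularEpi _).2
    (isRegularEpi_lift_homotopySource_homotopyTarget A n)) (pullback.lift _ _ h)
  exact Quot.sound (hRel_iff_exists_homotopy.2
    ⟨y, by simpa using hy =≫ pullback.fst _ _, by simpa using hy =≫ pullback.snd _ _⟩)

theorem toHomology_surjective (hP : RegularProjective P) :
    Function.Surjective (toHomology P A n) := by
  intro h
  obtain ⟨g, rfl⟩ := hP (q A (n + 1)) ((isRegEpi_iff_isRegularEpi _).2
    (inferInstanceAs (IsRegularEpi (cokernel.π (toCycles A n))))) h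
  let z : SZ (homSimplicial P A) (0 : P ⟶ A _⦋0⦌) (n + 1) :=
    ⟨g ≫ zArrow A (n + 1), fun i => (show (g ≫ zArrow A (n + 1)) ≫ A.δ i = 0 by
      rw [Category.assoc, zArrow_comp_δ, comp_zero]).trans (bpt_homSimplicial_zero P A n).symm⟩
  exact ⟨Quot.mk _ z, congrArg (· ≫ q A (n + 1)) (eq_toCycle (z := z) rfl).symm⟩

end HomotopyGroup

theorem homotopy_group_iso_hom_homology_general
    {C : Type u} [Category.{v} C] [HasZeroMorphisms C] [HasFiniteLimits C] [IsSemiAbelian C]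
    [HasCokernels C]
    (P : C) (hP : RegularProjective P) (A : SimplicialObject C) (n : ℕ) :
    (∃ φ : piSet (homSimplicial P A) (0 : P ⟶ A _⦋0⦌) (n + 1) → (P ⟶ Moore.H A (n + 1)),
      ∀ (z : SZ (homSimplicial P A) (0 : P ⟶ A _⦋0⦌) (n + 1))
        (g : P ⟶ Moore.Z A (n + 1)),
        g ≫ Moore.zArrow A (n + 1) = szVal z →
        φ (Quot.mk _ z) = g ≫ Moore.q A (n + 1)) ∧
    (∀ φ : piSet (homSimplicial P A) (0 : P ⟶ A _⦋0⦌) (n + 1) → (P ⟶ Moore.H A (n + 1)),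
      (∀ (z : SZ (homSimplicial P A) (0 : P ⟶ A _⦋0⦌) (n + 1))
        (g : P ⟶ Moore.Z A (n + 1)),
        g ≫ Moore.zArrow A (n + 1) = szVal z →
        φ (Quot.mk _ z) = g ≫ Moore.q A (n + 1)) →
      Function.Bijective φ) ∧
    -- naturality in `A`
    (∀ (B : SimplicialObject C) (f : A ⟶ B)
      (φA : piSet (homSimplicial P A) (0 : P ⟶ A _⦋0⦌) (n + 1) → (P ⟶ Moore.H A (n + 1)))
      (φB : piSet (homSimplicial P B) (0 : P ⟶ B _⦋0⦌) (n + 1) → (P ⟶ Moore.H B (n + 1))),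
      (∀ (z : SZ (homSimplicial P A) (0 : P ⟶ A _⦋0⦌) (n + 1))
        (g : P ⟶ Moore.Z A (n + 1)),
        g ≫ Moore.zArrow A (n + 1) = szVal z →
        φA (Quot.mk _ z) = g ≫ Moore.q A (n + 1)) →
      (∀ (z : SZ (homSimplicial P B) (0 : P ⟶ B _⦋0⦌) (n + 1))
        (g : P ⟶ Moore.Z B (n + 1)),
        g ≫ Moore.zArrow B (n + 1) = szVal z →
        φB (Quot.mk _ z) = g ≫ Moore.q B (n + 1)) →
      ∀ (η : Moore.H A (n + 1) ⟶ Moore.H B (n + 1))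
        (ζ : Moore.Z A (n + 1) ⟶ Moore.Z B (n + 1)),
        ζ ≫ Moore.zArrow B (n + 1) = Moore.zArrow A (n + 1) ≫ f.app (op ⦋n + 1⦌) →
        Moore.q A (n + 1) ≫ η = ζ ≫ Moore.q B (n + 1) →
        ∀ (z : SZ (homSimplicial P A) (0 : P ⟶ A _⦋0⦌) (n + 1))
          (z' : SZ (homSimplicial P B) (0 : P ⟶ B _⦋0⦌) (n + 1)),
          szVal z' = szVal z ≫ f.app (op ⦋n + 1⦌) →
          φB (Quot.mk _ z') = φA (Quot.mk _ z) ≫ η) := by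
  have eq_toHomology : ∀ φ, (∀ z (g : P ⟶ Moore.Z A (n + 1)),
      g ≫ Moore.zArrow A (n + 1) = szVal z → φ (Quot.mk _ z) = g ≫ Moore.q A (n + 1)) →
      φ = toHomology P A n :=
    fun φ hφ => funext <| Quot.ind fun z => hφ z _ (toCycle_zArrow z)
  refine ⟨⟨toHomology P A n, fun z g hg => by rw [eq_toCycle hg]; rfl⟩,
    fun φ hφ => eq_toHomology φ hφ ▸ ⟨toHomology_injective hP, toHomology_surjective hP⟩, ?_⟩
  intro B f φA φB hA hB η ζ hζ hqη z z' hz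
  rw [hB z' (toCycle z ≫ ζ) (by rw [Category.assoc, hζ, reassoc_of% toCycle_zArrow, hz]),
    hA z _ (toCycle_zArrow z), Category.assoc, Category.assoc, hqη]

/-- For a regular projective `P` and a simplicial object `A` in a
semi-abelian category, sending the homotopy class of `f : P ⟶ Zₙ₊₁A` to `qₙ₊₁ ∘ f`
defines a bijection `πₙ₊₁(hom(P,A), 0) ≅ hom(P, Hₙ₊₁A)`, natural in `A`. -/
theorem homotopy_group_iso_hom_homology
    {C : Type u} [Category.{v} C] [HasZeroMorphisms C] [HasFiniteLimits C] [IsSemiAbelian C]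
    [HasCokernels C]
    (hproj : EnoughRegularProjectives C)
    (P : C) (hP : RegularProjective P) (A : SimplicialObject C) (n : ℕ) :
    (∃ φ : piSet (homSimplicial P A) (0 : P ⟶ A _⦋0⦌) (n + 1) → (P ⟶ Moore.H A (n + 1)),
      ∀ (z : SZ (homSimplicial P A) (0 : P ⟶ A _⦋0⦌) (n + 1))
        (g : P ⟶ Moore.Z A (n + 1)),
        g ≫ Moore.zArrow A (n + 1) = szVal z →
        φ (Quot.mk _ z) = g ≫ Moore.q A (n + 1)) ∧
    (∀ φ : piSet (homSimplicial P A) (0 : P ⟶ A _⦋0⦌) (n + 1) → (P ⟶ Moore.H A (n + 1)),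
      (∀ (z : SZ (homSimplicial P A) (0 : P ⟶ A _⦋0⦌) (n + 1))
        (g : P ⟶ Moore.Z A (n + 1)),
        g ≫ Moore.zArrow A (n + 1) = szVal z →
        φ (Quot.mk _ z) = g ≫ Moore.q A (n + 1)) →
      Function.Bijective φ) ∧
    -- naturality in `A`
    (∀ (B : SimplicialObject C) (f : A ⟶ B)
      (φA : piSet (homSimplicial P A) (0 : P ⟶ A _⦋0⦌) (n + 1) → (P ⟶ Moore.H A (n + 1)))
      (φB : piSet (homSimplicial P B) (0 : P ⟶ B _⦋0⦌) (n + 1) → (P ⟶ Moore.H B (n + 1))),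
      (∀ (z : SZ (homSimplicial P A) (0 : P ⟶ A _⦋0⦌) (n + 1))
        (g : P ⟶ Moore.Z A (n + 1)),
        g ≫ Moore.zArrow A (n + 1) = szVal z →
        φA (Quot.mk _ z) = g ≫ Moore.q A (n + 1)) →
      (∀ (z : SZ (homSimplicial P B) (0 : P ⟶ B _⦋0⦌) (n + 1))
        (g : P ⟶ Moore.Z B (n + 1)),
        g ≫ Moore.zArrow B (n + 1) = szVal z →
        φB (Quot.mk _ z) = g ≫ Moore.q B (n + 1)) →
      ∀ (η : Moore.H A (n + 1) ⟶ Moore.H B (n + 1))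
        (ζ : Moore.Z A (n + 1) ⟶ Moore.Z B (n + 1)),
        ζ ≫ Moore.zArrow B (n + 1) = Moore.zArrow A (n + 1) ≫ f.app (op ⦋n + 1⦌) →
        Moore.q A (n + 1) ≫ η = ζ ≫ Moore.q B (n + 1) →
        ∀ (z : SZ (homSimplicial P A) (0 : P ⟶ A _⦋0⦌) (n + 1))
          (z' : SZ (homSimplicial P B) (0 : P ⟶ B _⦋0⦌) (n + 1)),
          szVal z' = szVal z ≫ f.app (op ⦋n + 1⦌) →
          φB (Quot.mk _ z') = φA (Quot.mk _ z) ≫ η) :=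
  homotopy_group_iso_hom_homology_general P hP A n

end SemiAbPaper
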